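/- Let (X, μ) be a probability space and b ≥ √2 a real. Suppose f_n, f are measurable functions with |f_n| ≤ K μ-a.e. for all n (for some real K ≥ 0), and suppose that for all n, μ{x : |f_n x - f x| > b^(-n)} ≤ b^(-n). Then there exists n₀ such that for all n, ‖f_{n+n₀} - f‖_{L¹(μ)} ≤ b^(-n). -/

import Mathlib

open MeasureTheory Filter ENNReal

theorem effective_bounded_convergence {X : Type*} [MeasurableSpace X] (μ : Measure X)
    [IsProbabilityMeasure μ] (b : ℝ) (hb : Real.sqrt 2 ≤ b)
    (f : ℕ → X → ℝ) (g : X → ℝ) (hf : ∀ n, Measurable (f n)) (hg : Measurable g)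
    (K : ℝ) (hK : 0 ≤ K) (hbdd : ∀ n, ∀ᵐ x ∂μ, |f n x| ≤ K)
    (hconv : ∀ n : ℕ, μ {x | b ^ (-(n : ℤ)) < |f n x - g x|} ≤ ENNReal.ofReal (b ^ (-(n : ℤ)))) :
    ∃ n₀ : ℕ, ∀ n : ℕ,
      eLpNorm (f (n + n₀) - g) 1 μ ≤ ENNReal.ofReal (b ^ (-(n : ℤ))) := by
  have h1b : (1 : ℝ) < b := lt_of_lt_of_le (by
    rw [show (1:ℝ) = Real.sqrt 1 from Real.sqrt_one.symm]
    exact Real.sqrt_lt_sqrt (by norm_num) (by norm_num)) hb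
  have hb0 : (0 : ℝ) < b := lt_trans one_pos h1b
  have hbinv : b⁻¹ < 1 := inv_lt_one_of_one_lt₀ h1b
  have hbinv0 : (0 : ℝ) ≤ b⁻¹ := inv_nonneg.2 hb0.le
  have hzpow : ∀ n : ℕ, b ^ (-(n : ℤ)) = (b⁻¹) ^ n := by
    intro n; rw [zpow_neg, zpow_natCast, inv_pow]
  set s : ℕ → Set X := fun n => {x | b ^ (-(n : ℤ)) < |f n x - g x|} with hs
  have hsmeas : ∀ n, MeasurableSet (s n) := fun n =>
    measurableSet_lt measurable_const (((hf n).sub hg).abs)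
  -- Borel-Cantelli: sum of measures finite
  have hsum : (∑' n, μ (s n)) ≠ ⊤ := by
    refine ne_top_of_le_ne_top ?_ (ENNReal.tsum_le_tsum (fun n => (hconv n).trans_eq (by rw [hzpow])))
    have : ∀ n : ℕ, ENNReal.ofReal ((b⁻¹) ^ n) = (ENNReal.ofReal b⁻¹) ^ n := by
      intro n; rw [ENNReal.ofReal_pow hbinv0]
    simp_rw [this]
    rw [ENNReal.tsum_geometric]
    have hlt : ENNReal.ofReal b⁻¹ < 1 := by
      rw [← ENNReal.ofReal_one]; exact ENNReal.ofReal_lt_ofReal_iff_of_nonneg hbinv0 |>.2 hbinv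
    simp [ENNReal.inv_ne_top, tsub_eq_zero_iff_le, not_le.2 hlt]
  have hBC : ∀ᵐ x ∂μ, ∀ᶠ n in atTop, x ∉ s n := ae_eventually_notMem hsum
  -- |g| ≤ K a.e.
  have hgK : ∀ᵐ x ∂μ, |g x| ≤ K := by
    have hall : ∀ᵐ x ∂μ, ∀ n, |f n x| ≤ K := ae_all_iff.2 hbdd
    filter_upwards [hBC, hall] with x hx hxK
    have htend0 : Tendsto (fun n => |f n x - g x|) atTop (nhds 0) := by
      apply squeeze_zero' (Eventually.of_forall fun n => abs_nonneg _)
        (hx.mono fun n hn => le_of_not_gt fun h => hn (by simpa [hs] using h))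
      simpa [hzpow] using (tendsto_pow_atTop_nhds_zero_of_lt_one hbinv0 hbinv)
    have htend : Tendsto (fun n => f n x) atTop (nhds (g x)) := by
      rw [tendsto_iff_norm_sub_tendsto_zero]
      simpa [Real.norm_eq_abs] using htend0
    exact le_of_tendsto ((continuous_abs.tendsto _).comp htend) (Eventually.of_forall hxK)
  -- main L1 bound for each m
  have hmain : ∀ m : ℕ, eLpNorm (f m - g) 1 μ ≤ ENNReal.ofReal ((2*K+1) * b ^ (-(m : ℤ))) := by
    intro m
    rw [eLpNorm_one_eq_lintegral_enorm]
    have hbm0 : (0:ℝ) ≤ b ^ (-(m : ℤ)) := zpow_nonneg hb0.le _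
    have hptwise : ∀ᵐ x ∂μ, (‖(f m - g) x‖₊ : ℝ≥0∞) ≤
        (s m).indicator (fun _ => ENNReal.ofReal (2*K)) x + ENNReal.ofReal (b ^ (-(m : ℤ))) := by
      filter_upwards [hbdd m, hgK] with x hfx hgx
      have heq : (‖(f m - g) x‖₊ : ℝ≥0∞) = ENNReal.ofReal (|f m x - g x|) := by
        rw [← ofReal_coe_nnreal, coe_nnnorm]; simp [Real.norm_eq_abs]
      rw [heq]
      by_cases hxs : x ∈ s m
      · rw [Set.indicator_of_mem hxs]
        refine le_add_of_le_of_nonneg (ENNReal.ofReal_le_ofReal ?_) zero_le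
        calc |f m x - g x| ≤ |f m x| + |g x| := abs_sub _ _
          _ ≤ K + K := add_le_add hfx hgx
          _ = 2*K := by ring
      · rw [Set.indicator_of_notMem hxs]
        rw [zero_add]
        exact ENNReal.ofReal_le_ofReal (le_of_not_gt fun h => hxs (by simpa [hs] using h))
    calc ∫⁻ x, (‖(f m - g) x‖₊ : ℝ≥0∞) ∂μ
        ≤ ∫⁻ x, ((s m).indicator (fun _ => ENNReal.ofReal (2*K)) x + ENNReal.ofReal (b ^ (-(m:ℤ)))) ∂μ :=
          lintegral_mono_ae hptwise
      _ = ENNReal.ofReal (2*K) * μ (s m) + ENNReal.ofReal (b ^ (-(m:ℤ))) * μ Set.univ := by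
          rw [lintegral_add_right _ measurable_const, lintegral_indicator (hsmeas m),
            lintegral_const, lintegral_const]
          simp [Measure.restrict_apply_univ]
      _ ≤ ENNReal.ofReal (2*K) * ENNReal.ofReal (b ^ (-(m:ℤ))) + ENNReal.ofReal (b ^ (-(m:ℤ))) := by
          rw [measure_univ, mul_one]
          exact add_le_add_left (mul_le_mul_right (hconv m) _) _
      _ = ENNReal.ofReal ((2*K+1) * b ^ (-(m : ℤ))) := by
          rw [← ENNReal.ofReal_mul (by linarith), ← ENNReal.ofReal_add (by positivity) hbm0]
          ring_nf
  -- choose n₀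
  obtain ⟨n₀, hn₀⟩ := pow_unbounded_of_one_lt (2*K+1) h1b
  refine ⟨n₀, fun n => (hmain (n + n₀)).trans (ENNReal.ofReal_le_ofReal ?_)⟩
  have : (2*K+1) * b ^ (-((n+n₀ : ℕ) : ℤ)) ≤ b ^ (n₀:ℤ) * b ^ (-((n+n₀ : ℕ) : ℤ)) := by
    apply mul_le_mul_of_nonneg_right _ (zpow_nonneg hb0.le _)
    rw [zpow_natCast]; exact hn₀.le
  refine this.trans (le_of_eq ?_)
  rw [← zpow_add₀ (ne_of_gt hb0)]
  congr 1
  push_cast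
  ring
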